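/- Let X1, X2 be independent geometric random variables with success probabilities p1, p2 ∈ (0,1], and Y1, Y2 independent geometric random variables with success probability (p1+p2)/2, all independent of a random variable Z taking nonnegative integer values. Then for any positive integer j, P(Z + X1 + X2 > j) ≥ P(Z + Y1 + Y2 > j). -/

import Mathlib

/-!
Write `qᵢ = 1 - pᵢ`. Summing the geometric law gives, for independent `X₁ ~ Geo(p₁)`,
`X₂ ~ Geo(p₂)`, the symmetric tail formula
`P(X₁ + X₂ > M + 1) = (q₁^(M+1) + q₂^(M+1)) / 2 + (p₁ + p₂) / 2 · h_M(q₁, q₂)`,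
where `h_M(q₁, q₂) = ∑_{i ≤ M} q₁^i q₂^(M-i)` is the complete homogeneous polynomial.
Replacing `p₁, p₂` by their mean leaves `(p₁ + p₂) / 2` unchanged and replaces `q₁, q₂` by their
mean; both the power mean `(q₁^n + q₂^n) / 2` and `h_M` can only decrease under this
(convexity of `x ↦ x^n`, resp. the recursion for `h_M`). Hence `X₁ + X₂` is stochastically
larger than `Y₁ + Y₂`, and this survives adding the independent `Z` by conditioning on its value.
-/

open MeasureTheory ProbabilityTheory Finset

lemma pow_add_div_two_le_add_pow_div_two {a b : ℝ} (ha : 0 ≤ a) (hb : 0 ≤ b) (n : ℕ) :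
    ((a + b) / 2) ^ n ≤ (a ^ n + b ^ n) / 2 := by
  have h := (convexOn_pow n).2 (Set.mem_Ici.mpr ha) (Set.mem_Ici.mpr hb)
    (by norm_num : (0 : ℝ) ≤ 1 / 2) (by norm_num : (0 : ℝ) ≤ 1 / 2) (by norm_num)
  simp only [smul_eq_mul] at h
  calc ((a + b) / 2) ^ n = (1 / 2 * a + 1 / 2 * b) ^ n := by ring
    _ ≤ 1 / 2 * a ^ n + 1 / 2 * b ^ n := h
    _ = (a ^ n + b ^ n) / 2 := by ring

noncomputable def completeHomog (a b : ℝ) (k : ℕ) : ℝ :=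
  ∑ i ∈ range (k + 1), a ^ i * b ^ (k - i)

section CompleteHomog

variable (a b : ℝ)

lemma completeHomog_succ (k : ℕ) :
    completeHomog a b (k + 1) = a * completeHomog a b k + b ^ (k + 1) := by
  rw [completeHomog, sum_range_succ', completeHomog, mul_sum]
  simp only [pow_zero, one_mul, Nat.sub_zero, Nat.succ_sub_succ]
  exact congrArg (· + _) (sum_congr rfl fun i _ => by ring)

lemma completeHomog_comm (k : ℕ) : completeHomog a b k = completeHomog b a k := by
  rw [completeHomog, ← sum_range_reflect]
  refine sum_congr rfl fun i hi => ?_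
  rw [mem_range] at hi
  rw [show k + 1 - 1 - i = k - i by omega, show k - (k - i) = i by omega, mul_comm]

lemma completeHomog_succ' (k : ℕ) :
    completeHomog a b (k + 1) = b * completeHomog a b k + a ^ (k + 1) := by
  rw [completeHomog_comm a b, completeHomog_succ, completeHomog_comm b a]

end CompleteHomog

lemma completeHomog_add_div_two_le {a b : ℝ} (ha : 0 ≤ a) (hb : 0 ≤ b) (k : ℕ) :
    completeHomog ((a + b) / 2) ((a + b) / 2) k ≤ completeHomog a b k := by
  induction k with
  | zero => simp [completeHomog]
  | succ k ih =>
    have havg : completeHomog a b (k + 1)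
        = (a + b) / 2 * completeHomog a b k + (a ^ (k + 1) + b ^ (k + 1)) / 2 := by
      linear_combination (completeHomog_succ a b k + completeHomog_succ' a b k) / 2
    rw [completeHomog_succ, havg]
    gcongr
    exact pow_add_div_two_le_add_pow_div_two ha hb _

noncomputable def geomPMF (p : ℝ) (k : ℕ) : ℝ := if k = 0 then 0 else (1 - p) ^ (k - 1) * p

lemma sum_range_geomPMF (p : ℝ) (n : ℕ) :
    ∑ k ∈ range (n + 1), geomPMF p k = 1 - (1 - p) ^ n := by
  induction n with
  | zero => simp [geomPMF]
  | succ n ih => rw [sum_range_succ, ih, geomPMF, if_neg n.succ_ne_zero, Nat.add_sub_cancel]; ring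

noncomputable def geomAddGeomCDF (p₁ p₂ : ℝ) (m : ℕ) : ℝ :=
  ∑ a ∈ range (m + 1), geomPMF p₁ a * ∑ b ∈ range (m - a + 1), geomPMF p₂ b

lemma geomAddGeomCDF_succ (p₁ p₂ : ℝ) (M : ℕ) :
    geomAddGeomCDF p₁ p₂ (M + 1) = 1 - (((1 - p₁) ^ (M + 1) + (1 - p₂) ^ (M + 1)) / 2
      + (p₁ + p₂) / 2 * completeHomog (1 - p₁) (1 - p₂) M) := by
  have hterm : ∀ a ∈ range (M + 1),
      geomPMF p₁ (a + 1) * ∑ b ∈ range (M + 1 - (a + 1) + 1), geomPMF p₂ b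
        = (1 - p₁) ^ a * p₁ - p₁ * ((1 - p₁) ^ a * (1 - p₂) ^ (M - a)) := by
    intro a _
    rw [show M + 1 - (a + 1) = M - a by omega, sum_range_geomPMF, geomPMF,
      if_neg a.succ_ne_zero, Nat.add_sub_cancel]
    ring
  have hgeom : ∑ a ∈ range (M + 1), (1 - p₁) ^ a * p₁ = 1 - (1 - p₁) ^ (M + 1) := by
    simpa [geomPMF, sum_range_succ'] using sum_range_geomPMF p₁ (M + 1)
  rw [geomAddGeomCDF, sum_range_succ', sum_congr rfl hterm, sum_sub_distrib, hgeom,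
    ← mul_sum, ← completeHomog]
  simp only [geomPMF, if_pos, zero_mul, add_zero]
  linear_combination (completeHomog_succ' (1 - p₁) (1 - p₂) M
    - completeHomog_succ (1 - p₁) (1 - p₂) M) / 2

lemma geomAddGeomCDF_le_geomAddGeomCDF_avg {p₁ p₂ : ℝ} (hp₁ : p₁ ≤ 1) (hp₂ : p₂ ≤ 1)
    (hp : 0 ≤ p₁ + p₂) (m : ℕ) :
    geomAddGeomCDF p₁ p₂ m ≤ geomAddGeomCDF ((p₁ + p₂) / 2) ((p₁ + p₂) / 2) m := by
  cases m with
  | zero => simp [geomAddGeomCDF, geomPMF]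
  | succ M =>
    have hq : 1 - (p₁ + p₂) / 2 = ((1 - p₁) + (1 - p₂)) / 2 := by ring
    rw [geomAddGeomCDF_succ, geomAddGeomCDF_succ, hq, add_self_div_two, add_self_div_two]
    gcongr 1 - (?_ + _ * ?_)
    · exact pow_add_div_two_le_add_pow_div_two (by linarith) (by linarith) _
    · exact completeHomog_add_div_two_le (by linarith) (by linarith) _

section Independence

variable {Ω : Type*} [MeasurableSpace Ω] {μ : Measure Ω}

lemma measure_le_eq_sum_measure_eq {V : Ω → ℕ} (hV : Measurable V) (n : ℕ) :
    μ {ω | V ω ≤ n} = ∑ b ∈ range (n + 1), μ {ω | V ω = b} := by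
  rw [show {ω | V ω ≤ n} = V ⁻¹' ↑(range (n + 1)) by ext; simp]
  exact (sum_measure_preimage_singleton _ fun b _ => hV (measurableSet_singleton b)).symm

lemma measure_add_le_eq_sum {W V : Ω → ℕ} (hW : Measurable W) (hV : Measurable V)
    (hWV : IndepFun W V μ) (j : ℕ) :
    μ {ω | W ω + V ω ≤ j}
      = ∑ z ∈ range (j + 1), μ {ω | W ω = z} * μ {ω | V ω ≤ j - z} := by
  have hset : {ω | W ω + V ω ≤ j}
      = ⋃ z ∈ range (j + 1), ({ω | W ω = z} ∩ {ω | V ω ≤ j - z}) := by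
    ext ω
    simp only [Set.mem_ofPred_eq, Set.mem_iUnion, mem_range, Set.mem_inter_iff, exists_prop]
    exact ⟨fun h => ⟨W ω, by omega, rfl, by omega⟩, by rintro ⟨z, hz, rfl, h⟩; omega⟩
  rw [hset, measure_biUnion_finset]
  · exact sum_congr rfl fun z _ =>
      hWV.measure_inter_preimage_eq_mul _ _ (measurableSet_singleton z) measurableSet_Iic
  · exact fun b _ c _ hbc => Set.disjoint_left.mpr fun ω h₁ h₂ => hbc (h₁.1.symm.trans h₂.1)
  · exact fun z _ => (hW (measurableSet_singleton z)).inter (hV measurableSet_Iic)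

lemma measure_add_le_mono_of_indepFun {Z V V' : Ω → ℕ} (hZ : Measurable Z) (hV : Measurable V)
    (hV' : Measurable V') (hZV : IndepFun Z V μ) (hZV' : IndepFun Z V' μ)
    (hle : ∀ m, μ {ω | V ω ≤ m} ≤ μ {ω | V' ω ≤ m}) (j : ℕ) :
    μ {ω | Z ω + V ω ≤ j} ≤ μ {ω | Z ω + V' ω ≤ j} := by
  rw [measure_add_le_eq_sum hZ hV hZV, measure_add_le_eq_sum hZ hV' hZV']
  exact sum_le_sum fun z _ => mul_le_mul_right (hle _) _

lemma measure_lt_le_of_measure_le [IsProbabilityMeasure μ] {U U' : Ω → ℕ}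
    (hU : Measurable U) (hU' : Measurable U') {j : ℕ}
    (hle : μ {ω | U ω ≤ j} ≤ μ {ω | U' ω ≤ j}) :
    μ {ω | j < U' ω} ≤ μ {ω | j < U ω} := by
  simp only [← not_le, ← Set.compl_ofPred]
  rw [prob_compl_eq_one_sub (measurableSet_le hU measurable_const),
    prob_compl_eq_one_sub (measurableSet_le hU' measurable_const)]
  exact tsub_le_tsub_left hle 1

lemma toReal_measure_add_le_eq_geomAddGeomCDF [IsFiniteMeasure μ] {W V : Ω → ℕ}
    (hW : Measurable W) (hV : Measurable V) (hWV : IndepFun W V μ) {p q : ℝ}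
    (hW_law : ∀ k, (μ {ω | W ω = k}).toReal = geomPMF p k)
    (hV_law : ∀ k, (μ {ω | V ω = k}).toReal = geomPMF q k) (m : ℕ) :
    (μ {ω | W ω + V ω ≤ m}).toReal = geomAddGeomCDF p q m := by
  rw [measure_add_le_eq_sum hW hV hWV, ENNReal.toReal_sum fun _ _ => by finiteness,
    geomAddGeomCDF]
  refine sum_congr rfl fun a _ => ?_
  rw [ENNReal.toReal_mul, hW_law, measure_le_eq_sum_measure_eq hV,
    ENNReal.toReal_sum fun _ _ => measure_ne_top _ _]
  simp only [hV_law]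

lemma ProbabilityTheory.iIndepFun.indepFun_one_two {Z A B : Ω → ℕ}
    (h : iIndepFun ![Z, A, B] μ) : IndepFun A B μ := by
  simpa using h.indepFun (i := 1) (j := 2) (by decide)

lemma ProbabilityTheory.iIndepFun.indepFun_zero_add {Z A B : Ω → ℕ} (hZ : Measurable Z)
    (hA : Measurable A) (hB : Measurable B) (h : iIndepFun ![Z, A, B] μ) :
    IndepFun Z (A + B) μ := by
  have hm : ∀ i, Measurable (![Z, A, B] i) := by
    intro i; fin_cases i <;> assumption
  simpa using h.indepFun_add_right hm 0 1 2 (by decide) (by decide)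

end Independence

theorem stmt_18_general {Ω : Type*} [MeasureSpace Ω] [IsProbabilityMeasure (ℙ : Measure Ω)]
    (Z X1 X2 Y1 Y2 : Ω → ℕ)
    (hZm : Measurable Z) (hX1m : Measurable X1) (hX2m : Measurable X2)
    (hY1m : Measurable Y1) (hY2m : Measurable Y2)
    (p1 p2 : ℝ) (hp1 : 0 < p1) (hp1' : p1 ≤ 1) (hp2 : 0 < p2) (hp2' : p2 ≤ 1)
    (hlaw1 : ∀ k : ℕ, (ℙ {ω | X1 ω = k}).toReal =
      if k = 0 then 0 else (1 - p1) ^ (k - 1) * p1)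
    (hlaw2 : ∀ k : ℕ, (ℙ {ω | X2 ω = k}).toReal =
      if k = 0 then 0 else (1 - p2) ^ (k - 1) * p2)
    (hlawY1 : ∀ k : ℕ, (ℙ {ω | Y1 ω = k}).toReal =
      if k = 0 then 0 else (1 - (p1 + p2) / 2) ^ (k - 1) * ((p1 + p2) / 2))
    (hlawY2 : ∀ k : ℕ, (ℙ {ω | Y2 ω = k}).toReal =
      if k = 0 then 0 else (1 - (p1 + p2) / 2) ^ (k - 1) * ((p1 + p2) / 2))
    (hindepX : iIndepFun ![Z, X1, X2] ℙ)
    (hindepY : iIndepFun ![Z, Y1, Y2] ℙ)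
    (j : ℕ) :
    ℙ {ω | j < Z ω + Y1 ω + Y2 ω} ≤ ℙ {ω | j < Z ω + X1 ω + X2 ω} := by
  have hcdf : ∀ m, ℙ {ω | X1 ω + X2 ω ≤ m} ≤ ℙ {ω | Y1 ω + Y2 ω ≤ m} := fun m => by
    rw [← ENNReal.toReal_le_toReal (measure_ne_top _ _) (measure_ne_top _ _),
      toReal_measure_add_le_eq_geomAddGeomCDF hX1m hX2m hindepX.indepFun_one_two hlaw1 hlaw2,
      toReal_measure_add_le_eq_geomAddGeomCDF hY1m hY2m hindepY.indepFun_one_two hlawY1 hlawY2]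
    exact geomAddGeomCDF_le_geomAddGeomCDF_avg hp1' hp2' (by positivity) m
  have hsum := measure_add_le_mono_of_indepFun hZm (hX1m.add hX2m) (hY1m.add hY2m)
    (hindepX.indepFun_zero_add hZm hX1m hX2m) (hindepY.indepFun_zero_add hZm hY1m hY2m) hcdf j
  simp only [Pi.add_apply, ← add_assoc] at hsum
  exact measure_lt_le_of_measure_le ((hZm.add hX1m).add hX2m) ((hZm.add hY1m).add hY2m) hsum

theorem stmt_18 {Ω : Type*} [MeasureSpace Ω] [IsProbabilityMeasure (ℙ : Measure Ω)]
    (Z X1 X2 Y1 Y2 : Ω → ℕ)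
    (hZm : Measurable Z) (hX1m : Measurable X1) (hX2m : Measurable X2)
    (hY1m : Measurable Y1) (hY2m : Measurable Y2)
    (p1 p2 : ℝ) (hp1 : 0 < p1) (hp1' : p1 ≤ 1) (hp2 : 0 < p2) (hp2' : p2 ≤ 1)
    (hlaw1 : ∀ k : ℕ, (ℙ {ω | X1 ω = k}).toReal =
      if k = 0 then 0 else (1 - p1) ^ (k - 1) * p1)
    (hlaw2 : ∀ k : ℕ, (ℙ {ω | X2 ω = k}).toReal =
      if k = 0 then 0 else (1 - p2) ^ (k - 1) * p2)
    (hlawY1 : ∀ k : ℕ, (ℙ {ω | Y1 ω = k}).toReal =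
      if k = 0 then 0 else (1 - (p1 + p2) / 2) ^ (k - 1) * ((p1 + p2) / 2))
    (hlawY2 : ∀ k : ℕ, (ℙ {ω | Y2 ω = k}).toReal =
      if k = 0 then 0 else (1 - (p1 + p2) / 2) ^ (k - 1) * ((p1 + p2) / 2))
    (hindepX : iIndepFun ![Z, X1, X2] ℙ)
    (hindepY : iIndepFun ![Z, Y1, Y2] ℙ)
    (j : ℕ) (hj : 1 ≤ j) :
    ℙ {ω | j < Z ω + Y1 ω + Y2 ω} ≤ ℙ {ω | j < Z ω + X1 ω + X2 ω} :=
  stmt_18_general Z X1 X2 Y1 Y2 hZm hX1m hX2m hY1m hY2m p1 p2 hp1 hp1' hp2 hp2' hlaw1 hlaw2 hlawY1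
    hlawY2 hindepX hindepY j
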